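/- Let α₂, α₁, β ∈ ℚ and let (uₙ)_{n≥0} satisfy (n+1)²·u_{n+1} + (α₂n² + α₂n − β)·uₙ + α₁n²·u_{n−1} = 0 for all n ≥ 0 (with u_{−1} = 0). Define the sequence (vₘ)_{m≥0} by v_{2n} = C(2n, n)·uₙ and v_{2n+1} = 0, where C(2n,n) is the central binomial coefficient. Then for every m ≥ 0: (m+1)³·v_{m+1} + 4m(α₂m² − 4β − α₂)·v_{m−1} + 16·α₁·m(m−1)(m−2)·v_{m−3} = 0 (with vₖ = 0 for k < 0). Equivalently, the formal power series Σₘ vₘtᵐ is annihilated by the D3 operator with parameters (α₃, α₂, α₁, α₀) = (0, 4α₂, 0, 16α₁) and (β₁, β₀) = (0, −16β − 4α₂). -/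

import Mathlib

/-!
Comparing coefficients turns `D3op … (mk v) = 0` into a recurrence linking `v (m + 1)`,
`v (m - 1)` and `v (m - 3)`. At even `m` every term involves an odd index, so it vanishes. At
`m = 2n + 1`, the identity `(n + 1) C(2n+2, n+1) = 2(2n + 1) C(2n, n)` shows that the D3
recurrence is `16 (2n + 1) C(2n, n)` times the D2 recurrence at `n`.
-/

open PowerSeries

/-- The Euler operator `D = t·d/dt` on formal power series: `D(tⁿ) = n·tⁿ`. -/
noncomputable def eulerD {K : Type*} [Semiring K] (f : PowerSeries K) : PowerSeries K :=
  PowerSeries.mk fun n => (n : K) * PowerSeries.coeff n f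

/-- The operator `D + c`. -/
noncomputable def eulerDplus {K : Type*} [Semiring K] (c : K) (f : PowerSeries K) :
    PowerSeries K :=
  eulerD f + C c * f

/-- The D3 operator
`D³ + t(D + 1/2)(α₃(D² + D) + β₁) + t²(D+1)(α₂(D+1)² + β₀)
  + α₁t³(D+2)(D + 3/2)(D+1) + α₀t⁴(D+3)(D+2)(D+1)`. -/
noncomputable def D3op {K : Type*} [Field K] (α₃ α₂ α₁ α₀ β₁ β₀ : K) (φ : PowerSeries K) :
    PowerSeries K :=
  eulerD (eulerD (eulerD φ))
    + X * eulerDplus (1 / 2) (C α₃ * (eulerD (eulerD φ) + eulerD φ) + C β₁ * φ)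
    + X ^ 2 * eulerDplus 1 (C α₂ * eulerDplus 1 (eulerDplus 1 φ) + C β₀ * φ)
    + C α₁ * X ^ 3 * eulerDplus 2 (eulerDplus (3 / 2) (eulerDplus 1 φ))
    + C α₀ * X ^ 4 * eulerDplus 3 (eulerDplus 2 (eulerDplus 1 φ))

section EulerCoefficients

variable {K : Type*} [Semiring K]

@[simp]
theorem coeff_eulerD (f : PowerSeries K) (n : ℕ) : coeff n (eulerD f) = n * coeff n f := by
  simp [eulerD]

@[simp]
theorem coeff_eulerDplus (c : K) (f : PowerSeries K) (n : ℕ) :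
    coeff n (eulerDplus c f) = (n + c) * coeff n f := by
  simp [eulerDplus, add_mul]

end EulerCoefficients

theorem coeff_D3op {K : Type*} [Field K] [CharZero K] (α₃ α₂ α₁ α₀ β₁ β₀ : K)
    (φ : PowerSeries K) (n : ℕ) :
    coeff n (D3op α₃ α₂ α₁ α₀ β₁ β₀ φ) = (n : K) ^ 3 * coeff n φ
      + (n - 1 / 2) * (α₃ * n * (n - 1) + β₁) * (if 1 ≤ n then coeff (n - 1) φ else 0)
      + (n - 1) * (α₂ * (n - 1) ^ 2 + β₀) * (if 2 ≤ n then coeff (n - 2) φ else 0)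
      + α₁ * (n - 1) * (n - 3 / 2) * (n - 2) * (if 3 ≤ n then coeff (n - 3) φ else 0)
      + α₀ * (n - 1) * (n - 2) * (n - 3) * (if 4 ≤ n then coeff (n - 4) φ else 0) := by
  simp only [D3op, map_add, mul_assoc, coeff_C_mul]
  rcases n with _ | _ | _ | _ | n <;>
    simp only [coeff_X_pow_mul', coeff_succ_X_mul, coeff_zero_X_mul, coeff_eulerD,
      coeff_eulerDplus, map_add, coeff_C_mul, Nat.reduceLeDiff, Nat.reduceSubDiff, reduceIte,
      Nat.add_sub_cancel, Nat.cast_add, Nat.cast_ofNat, Nat.cast_zero, Nat.cast_one] <;> ring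

section Recurrences

variable {K : Type*} [CommRing K] (α₂ α₁ β : K)

/-- Left-hand side of the D2 recurrence with parameters `(α₂, α₁, 0, β)`; `d3Residual` is that of
the D3 recurrence with parameters `(0, 4α₂, 0, 16α₁; 0, -16β - 4α₂)`. -/
def d2Residual (u : ℕ → K) (n : ℕ) : K :=
  ((n : K) + 1) ^ 2 * u (n + 1) + (α₂ * n ^ 2 + α₂ * n - β) * u n
    + α₁ * n ^ 2 * (if 1 ≤ n then u (n - 1) else 0)

def d3Residual (v : ℕ → K) (m : ℕ) : K :=
  ((m : K) + 1) ^ 3 * v (m + 1)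
    + 4 * (m : K) * (α₂ * m ^ 2 - 4 * β - α₂) * (if 1 ≤ m then v (m - 1) else 0)
    + 16 * α₁ * (m : K) * ((m : K) - 1) * ((m : K) - 2) * (if 3 ≤ m then v (m - 3) else 0)

variable {α₂ α₁ β}

theorem d3Residual_two_mul {v : ℕ → K} (hvodd : ∀ n, v (2 * n + 1) = 0) (n : ℕ) :
    d3Residual α₂ α₁ β v (2 * n) = 0 := by
  have h1 : 1 ≤ 2 * n → v (2 * n - 1) = 0 := fun _ => by
    rw [show 2 * n - 1 = 2 * (n - 1) + 1 by omega, hvodd]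
  have h3 : 3 ≤ 2 * n → v (2 * n - 3) = 0 := fun _ => by
    rw [show 2 * n - 3 = 2 * (n - 2) + 1 by omega, hvodd]
  rw [d3Residual, hvodd, ite_eq_right_iff.2 h1, ite_eq_right_iff.2 h3]
  ring

theorem d3Residual_two_mul_add_one {u v : ℕ → K}
    (hveven : ∀ n, v (2 * n) = (Nat.choose (2 * n) n : K) * u n) (n : ℕ) :
    d3Residual α₂ α₁ β v (2 * n + 1)
      = 16 * (2 * n + 1) * (Nat.choose (2 * n) n : K) * d2Residual α₂ α₁ β u n := by
  have hbinom : ∀ k : ℕ, ((k : K) + 1) * ((2 * (k + 1)).choose (k + 1) : K)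
      = 2 * (2 * k + 1) * ((2 * k).choose k : K) := fun k => by
    simpa [Nat.centralBinom] using
      congrArg (Nat.cast (R := K)) (Nat.succ_mul_centralBinom_succ k)
  rcases n with _ | k
  · have h0 : v 0 = u 0 := by simpa using hveven 0
    have h2 : v 2 = 2 * u 1 := by simpa using hveven 1
    simp only [d3Residual, d2Residual, Nat.reduceAdd, h0, h2, Nat.cast_zero, Nat.cast_one, le_refl,
      reduceIte, Nat.choose_self]
    ring
  · have h1 : 2 * (k + 1) + 1 + 1 = 2 * (k + 2) := by omega
    have h3 : 2 * (k + 1) + 1 - 3 = 2 * k := by omega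
    simp only [d3Residual, d2Residual, h1, h3, Nat.add_sub_cancel, hveven]
    rw [if_pos (by omega), if_pos (by omega), if_pos (by omega)]
    have hbinom1 := hbinom (k + 1)
    push_cast at hbinom1 ⊢
    linear_combination 8 * ((k : K) + 2) ^ 2 * u (k + 2) * hbinom1
      - 16 * α₁ * (2 * (k : K) + 3) * ((k : K) + 1) * u k * hbinom k

end Recurrences

section Coefficients

variable {K : Type*} [Field K] [CharZero K]

theorem coeff_zero_D3op (α₃ α₂ α₁ α₀ β₁ β₀ : K) (φ : PowerSeries K) :
    coeff 0 (D3op α₃ α₂ α₁ α₀ β₁ β₀ φ) = 0 := by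
  simp [coeff_D3op, -coeff_zero_eq_constantCoeff]

theorem coeff_succ_D3op_eq_d3Residual (α₂ α₁ β : K) (v : ℕ → K) (m : ℕ) :
    coeff (m + 1) (D3op 0 (4 * α₂) 0 (16 * α₁) 0 (-16 * β - 4 * α₂) (mk v))
      = d3Residual α₂ α₁ β v m := by
  simp only [coeff_D3op, coeff_mk, d3Residual, Nat.reduceLeDiff, Nat.reduceSubDiff]
  push_cast
  ring

end Coefficients

theorem stmt_14 (α₂ α₁ β : ℚ) (u : ℕ → ℚ)
    (hrec : ∀ n : ℕ, ((n : ℚ) + 1) ^ 2 * u (n + 1) + (α₂ * n ^ 2 + α₂ * n - β) * u n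
      + α₁ * n ^ 2 * (if 1 ≤ n then u (n - 1) else 0) = 0)
    (v : ℕ → ℚ)
    (hveven : ∀ n : ℕ, v (2 * n) = (Nat.choose (2 * n) n : ℚ) * u n)
    (hvodd : ∀ n : ℕ, v (2 * n + 1) = 0) :
    (∀ m : ℕ, ((m : ℚ) + 1) ^ 3 * v (m + 1)
      + 4 * (m : ℚ) * (α₂ * m ^ 2 - 4 * β - α₂) * (if 1 ≤ m then v (m - 1) else 0)
      + 16 * α₁ * (m : ℚ) * ((m : ℚ) - 1) * ((m : ℚ) - 2)
        * (if 3 ≤ m then v (m - 3) else 0) = 0) ∧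
    D3op 0 (4 * α₂) 0 (16 * α₁) 0 (-16 * β - 4 * α₂) (PowerSeries.mk v) = 0 := by
  have hd3 : ∀ m, d3Residual α₂ α₁ β v m = 0 := by
    intro m
    obtain ⟨n, rfl | rfl⟩ := Nat.even_or_odd' m
    · exact d3Residual_two_mul hvodd n
    · rw [d3Residual_two_mul_add_one hveven, show d2Residual α₂ α₁ β u n = 0 from hrec n,
        mul_zero]
  refine ⟨hd3, ?_⟩
  ext (_ | m)
  · rw [coeff_zero_D3op, map_zero]
  · rw [coeff_succ_D3op_eq_d3Residual, hd3, map_zero]
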